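/- Fix h_0 > 0 and h^u > h_0. For B ≥ 2 set C_i = 1 + i(h^u − h_0)/(h_0 B) for i = 1,...,B and let g_{i} = (Σ_k C_k^2 − C_i Σ_k C_k)/(B Σ_k C_k^2 − (Σ_k C_k)^2). Then as B → ∞, Σ_{i=1}^B g_i C_i^2 converges to −(1 + r + r^2/6), where r = (h^u − h_0)/h_0. -/
import Mathlib


open Filter

set_option maxHeartbeats 1000000

lemma sumC (c : ℝ) (B : ℕ) :
    ∑ i : Fin B, (1 + ((i : ℕ) + 1 : ℝ) * c) = B + c * (B * (B + 1) / 2) := by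
  induction B with
  | zero => simp
  | succ n ih =>
      rw [Fin.sum_univ_castSucc]
      simp only [Fin.coe_castSucc, Fin.val_last]
      rw [ih]; push_cast; ring

lemma sumC2 (c : ℝ) (B : ℕ) :
    ∑ i : Fin B, (1 + ((i : ℕ) + 1 : ℝ) * c) ^ 2
      = B + 2 * c * (B * (B + 1) / 2) + c ^ 2 * (B * (B + 1) * (2 * B + 1) / 6) := by
  induction B with
  | zero => simp
  | succ n ih =>
      rw [Fin.sum_univ_castSucc]
      simp only [Fin.coe_castSucc, Fin.val_last]
      rw [ih]; push_cast; ring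

lemma sumC3 (c : ℝ) (B : ℕ) :
    ∑ i : Fin B, (1 + ((i : ℕ) + 1 : ℝ) * c) ^ 3
      = B + 3 * c * (B * (B + 1) / 2) + 3 * c ^ 2 * (B * (B + 1) * (2 * B + 1) / 6)
        + c ^ 3 * (B * (B + 1) / 2) ^ 2 := by
  induction B with
  | zero => simp
  | succ n ih =>
      rw [Fin.sum_univ_castSucc]
      simp only [Fin.coe_castSucc, Fin.val_last]
      rw [ih]; push_cast; ring

lemma sum_g {B : ℕ} (S1 S2 Den : ℝ) (C : Fin B → ℝ) :
    ∑ i, ((S2 - C i * S1) / Den) * C i ^ 2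
      = (S2 * ∑ i, C i ^ 2 - S1 * ∑ i, C i ^ 3) / Den := by
  rw [Finset.mul_sum, Finset.mul_sum, ← Finset.sum_sub_distrib, Finset.sum_div]
  exact Finset.sum_congr rfl fun i _ => by ring

noncomputable def Fr (r x : ℝ) : ℝ :=
  ((1 + r * (1 + x) + r ^ 2 * (1 + x) * (2 + x) / 6) ^ 2
      - (1 + r * (1 + x) / 2)
        * (1 + 3 * r * (1 + x) / 2 + r ^ 2 * (1 + x) * (2 + x) / 2
            + r ^ 3 * (1 + x) ^ 2 / 4))
    / ((1 + r * (1 + x) + r ^ 2 * (1 + x) * (2 + x) / 6) - (1 + r * (1 + x) / 2) ^ 2)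

theorem stmt_8 (h0 hu : ℝ) (hh0 : 0 < h0) (hlt : h0 < hu) :
    Tendsto (fun B : ℕ =>
      ∑ i : Fin B,
        ((∑ k : Fin B, (1 + ((k : ℕ) + 1 : ℝ) * (hu - h0) / (h0 * B)) ^ 2
            - (1 + ((i : ℕ) + 1 : ℝ) * (hu - h0) / (h0 * B))
              * ∑ k : Fin B, (1 + ((k : ℕ) + 1 : ℝ) * (hu - h0) / (h0 * B))) /
          ((B : ℝ) * ∑ k : Fin B, (1 + ((k : ℕ) + 1 : ℝ) * (hu - h0) / (h0 * B)) ^ 2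
            - (∑ k : Fin B, (1 + ((k : ℕ) + 1 : ℝ) * (hu - h0) / (h0 * B))) ^ 2))
        * (1 + ((i : ℕ) + 1 : ℝ) * (hu - h0) / (h0 * B)) ^ 2)
      atTop
      (nhds (-(1 + (hu - h0) / h0 + ((hu - h0) / h0) ^ 2 / 6))) := by
  have hh0' : h0 ≠ 0 := ne_of_gt hh0
  set r : ℝ := (hu - h0) / h0 with hrdef
  have hr : 0 < r := div_pos (by linarith) hh0
  have hD0 : (1 + r * (1 + (0:ℝ)) + r ^ 2 * (1 + 0) * (2 + 0) / 6)
      - (1 + r * (1 + 0) / 2) ^ 2 ≠ 0 := by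
    have h : (1 + r * (1 + (0:ℝ)) + r ^ 2 * (1 + 0) * (2 + 0) / 6)
        - (1 + r * (1 + 0) / 2) ^ 2 = r ^ 2 / 12 := by ring
    rw [h]; positivity
  have hcont : ContinuousAt (Fr r) 0 := by
    unfold Fr
    exact ContinuousAt.div (by fun_prop) (by fun_prop) hD0
  have hF0 : Fr r 0 = -(1 + r + r ^ 2 / 6) := by
    unfold Fr
    rw [div_eq_iff hD0]; ring
  have hlim : Tendsto (fun B : ℕ => Fr r (1 / (B : ℝ))) atTop (nhds (-(1 + r + r ^ 2 / 6))) := by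
    rw [← hF0]
    exact hcont.tendsto.comp tendsto_one_div_atTop_nhds_zero_nat
  refine Tendsto.congr' ?_ hlim
  filter_upwards [eventually_ge_atTop 2] with B hB
  set b : ℝ := (B : ℝ) with hbdef
  have hb2 : (2 : ℝ) ≤ b := by rw [hbdef]; exact_mod_cast hB
  have hb : (0 : ℝ) < b := by linarith
  have hb0 : b ≠ 0 := ne_of_gt hb
  simp only [mul_div_assoc]
  set c : ℝ := (hu - h0) / (h0 * b) with hcdef
  have hc : c = r / b := by rw [hcdef, hrdef, div_div]
  rw [sum_g, sumC c B, sumC2 c B, sumC3 c B, ← hbdef, hc]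
  have hd1 : (1 + r * (1 + 1 / b) + r ^ 2 * (1 + 1 / b) * (2 + 1 / b) / 6)
      - (1 + r * (1 + 1 / b) / 2) ^ 2 ≠ 0 := by
    have h : (1 + r * (1 + 1 / b) + r ^ 2 * (1 + 1 / b) * (2 + 1 / b) / 6)
        - (1 + r * (1 + 1 / b) / 2) ^ 2 = r ^ 2 * (1 + 1 / b) * (1 - 1 / b) / 12 := by ring
    rw [h]
    have h1b : 0 < 1 - 1 / b := by
      rw [sub_pos, div_lt_one hb]; linarith
    have h2b : 0 < 1 + 1 / b := by positivity
    have := mul_pos (mul_pos (pow_pos hr 2) h2b) h1b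
    positivity
  have hd2 : b * (b + 2 * (r / b) * (b * (b + 1) / 2)
        + (r / b) ^ 2 * (b * (b + 1) * (2 * b + 1) / 6))
      - (b + r / b * (b * (b + 1) / 2)) ^ 2 ≠ 0 := by
    have h : b * (b + 2 * (r / b) * (b * (b + 1) / 2)
          + (r / b) ^ 2 * (b * (b + 1) * (2 * b + 1) / 6))
        - (b + r / b * (b * (b + 1) / 2)) ^ 2 = r ^ 2 * (b ^ 2 - 1) / 12 := by
      field_simp
      ring
    rw [h]
    have : (0:ℝ) < b ^ 2 - 1 := by nlinarith
    positivity
  unfold Fr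
  rw [div_eq_div_iff hd1 hd2]
  field_simp
  ring
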